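/- arXiv:0804.1838 — 2 statements merged into one kernel-verified Lean document; each statement's English description precedes it below -/
import Mathlib

section
/- Let V be a finite-dimensional vector space over a field K of characteristic zero, with basis e_1,...,e_n where n ≥ 2, and dual basis λ_1,...,λ_n. The element Σ_{i<j} λ_i^4 λ_j^2 of the sixth symmetric power S^6 V*, when interpreted as a linear map from S^4 V to S^2 V* (by contracting four symmetric slots), is surjective. -/
/-- The element `∑_{i<j} λᵢ⁴ λⱼ²` of `S⁶ V*` (given here by its full symmetrization,
a symmetric 6-linear form), contracted with four vectors `v 0, v 1, v 2, v 3 ∈ V`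
and evaluated on the remaining two slots `x, y`.  Here `V = Fin n → K` with standard
basis `e i` and dual basis `λ i`. -/
def contract6 {K : Type*} [Field K] (n : ℕ)
    (v : Fin 4 → (Fin n → K)) (x y : Fin n → K) : K :=
  let w : Fin 6 → (Fin n → K) := Fin.snoc (Fin.snoc v x) y
  ∑ i : Fin n, ∑ j : Fin n,
    if i < j then
      ∑ σ : Equiv.Perm (Fin 6), ∏ k : Fin 6,
        (if (k : ℕ) < 4 then w (σ k) i else w (σ k) j)
    else 0

namespace Contract6Aux

open Finset Equiv

set_option maxRecDepth 10000 in
lemma count24 : ∀ p q : Fin 6, p ≠ q →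
    ((Finset.univ.filter fun σ : Equiv.Perm (Fin 6) => σ 4 = p ∧ σ 5 = q)).card = 24 := by decide

set_option maxRecDepth 10000 in
lemma count0 : ∀ p : Fin 6,
    ((Finset.univ.filter fun σ : Equiv.Perm (Fin 6) => σ 4 = p ∧ σ 5 = p)).card = 0 := by decide

lemma step1 {K : Type*} [CommRing K] (a b : Fin 6 → K) (σ : Equiv.Perm (Fin 6)) :
    (∏ k : Fin 6, if (k : ℕ) < 4 then a (σ k) else b (σ k))
    = b (σ 4) * b (σ 5) * ∏ m : Fin 6, (if m = σ 4 ∨ m = σ 5 then 1 else a m) := by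
  rw [← Equiv.prod_comp σ (fun m => if m = σ 4 ∨ m = σ 5 then 1 else a m)]
  rw [Fin.prod_univ_six, Fin.prod_univ_six]
  have h04 : σ 0 ≠ σ 4 := σ.injective.ne (by decide)
  have h05 : σ 0 ≠ σ 5 := σ.injective.ne (by decide)
  have h14 : σ 1 ≠ σ 4 := σ.injective.ne (by decide)
  have h15 : σ 1 ≠ σ 5 := σ.injective.ne (by decide)
  have h24 : σ 2 ≠ σ 4 := σ.injective.ne (by decide)
  have h25 : σ 2 ≠ σ 5 := σ.injective.ne (by decide)
  have h34 : σ 3 ≠ σ 4 := σ.injective.ne (by decide)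
  have h35 : σ 3 ≠ σ 5 := σ.injective.ne (by decide)
  simp only [h04, h05, h14, h15, h24, h25, h34, h35, or_self, if_false, if_true,
    show ((0:Fin 6):ℕ) < 4 from by decide, show ((1:Fin 6):ℕ) < 4 from by decide,
    show ((2:Fin 6):ℕ) < 4 from by decide, show ((3:Fin 6):ℕ) < 4 from by decide,
    show ¬((4:Fin 6):ℕ) < 4 from by decide, show ¬((5:Fin 6):ℕ) < 4 from by decide,
    or_false, false_or, eq_self_iff_true, true_or, or_true, if_true]
  ring

lemma perm_sum {K : Type*} [CommRing K] (a b : Fin 6 → K) :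
    (∑ σ : Equiv.Perm (Fin 6), ∏ k : Fin 6, if (k : ℕ) < 4 then a (σ k) else b (σ k))
    = 24 * ∑ p : Fin 6, ∑ q : Fin 6,
        (if p ≠ q then b p * b q * ∏ m : Fin 6, (if m = p ∨ m = q then 1 else a m) else 0) := by
  have := Finset.sum_fiberwise_of_maps_to (s := (Finset.univ : Finset (Equiv.Perm (Fin 6))))
    (t := (Finset.univ : Finset (Fin 6 × Fin 6))) (g := fun σ => (σ 4, σ 5))
    (fun σ _ => Finset.mem_univ ((σ 4, σ 5)))
    (f := fun σ => ∏ k : Fin 6, if (k : ℕ) < 4 then a (σ k) else b (σ k))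
  rw [← this, Fintype.sum_prod_type]
  rw [Finset.mul_sum]
  refine Finset.sum_congr rfl fun p _ => ?_
  rw [Finset.mul_sum]
  refine Finset.sum_congr rfl fun q _ => ?_
  have hconst : ∀ σ ∈ Finset.univ.filter (fun σ : Equiv.Perm (Fin 6) => (σ 4, σ 5) = (p, q)),
      (∏ k : Fin 6, if (k : ℕ) < 4 then a (σ k) else b (σ k))
      = b p * b q * ∏ m : Fin 6, (if m = p ∨ m = q then 1 else a m) := by
    intro σ hσ
    simp only [Finset.mem_filter, Prod.mk.injEq] at hσ
    rw [step1, hσ.2.1, hσ.2.2]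
  rw [Finset.sum_congr rfl hconst, Finset.sum_const]
  simp only [Prod.mk.injEq]
  by_cases hpq : p = q
  · subst hpq
    rw [count0 p]
    simp
  · rw [count24 p q hpq]
    simp only [hpq, if_true, ne_eq, not_false_iff, ite_true]
    push_cast [nsmul_eq_mul]
    ring

lemma contract6_eq {K : Type*} [Field K] (n : ℕ) (v : Fin 4 → (Fin n → K)) (x y : Fin n → K) :
    contract6 n v x y = ∑ i : Fin n, ∑ j : Fin n,
      if i < j then 24 * ∑ p : Fin 6, ∑ q : Fin 6,
        (if p ≠ q then
          ![v 0, v 1, v 2, v 3, x, y] p j * ![v 0, v 1, v 2, v 3, x, y] q j *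
            ∏ m : Fin 6, (if m = p ∨ m = q then 1 else ![v 0, v 1, v 2, v 3, x, y] m i)
         else 0)
      else 0 := by
  have hw : (Fin.snoc (Fin.snoc v x) y : Fin 6 → (Fin n → K)) = ![v 0, v 1, v 2, v 3, x, y] := by
    funext m; fin_cases m <;> rfl
  unfold contract6
  simp only [hw]
  exact Finset.sum_congr rfl fun i _ => Finset.sum_congr rfl fun j _ => by
    split
    · exact perm_sum (fun m => ![v 0, v 1, v 2, v 3, x, y] m i)
        (fun m => ![v 0, v 1, v 2, v 3, x, y] m j)
    · rfl

/-- standard basis vector -/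
noncomputable def e {K : Type*} [Field K] {n : ℕ} (a : Fin n) : Fin n → K :=
  fun t => if a = t then 1 else 0

set_option maxHeartbeats 2000000 in
lemma caseB {K : Type*} [Field K] {n : ℕ} (a c : Fin n) (h : a < c) (x y : Fin n → K) :
    contract6 n ![e a, e a, e c, e c] x y = 48 * (x a * y a) := by
  rw [contract6_eq]
  have m0 : (![![e a, e a, e c, e c] 0, ![e a, e a, e c, e c] 1, ![e a, e a, e c, e c] 2,
      ![e a, e a, e c, e c] 3, x, y] : Fin 6 → (Fin n → K)) = ![e a, e a, e c, e c, x, y] := rfl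
  rw [m0]
  simp only [Fin.sum_univ_six, Fin.prod_univ_six,
    show (![e a, e a, e c, e c, x, y] : Fin 6 → (Fin n → K)) 0 = e a from rfl,
    show (![e a, e a, e c, e c, x, y] : Fin 6 → (Fin n → K)) 1 = e a from rfl,
    show (![e a, e a, e c, e c, x, y] : Fin 6 → (Fin n → K)) 2 = e c from rfl,
    show (![e a, e a, e c, e c, x, y] : Fin 6 → (Fin n → K)) 3 = e c from rfl,
    show (![e a, e a, e c, e c, x, y] : Fin 6 → (Fin n → K)) 4 = x from rfl,
    show (![e a, e a, e c, e c, x, y] : Fin 6 → (Fin n → K)) 5 = y from rfl]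
  simp only [e, Fin.reduceEq, Fin.reduceLT, ne_eq, ite_not, if_true, if_false,
    mul_ite, ite_mul, mul_zero, zero_mul, mul_one, one_mul, not_false_iff, not_true,
    ite_true, ite_false, zero_add, add_zero]
  rw [Finset.sum_eq_single a ?h1 ?h2]
  case h1 =>
    intro i _ hi
    apply Finset.sum_eq_zero
    intro j _
    simp [Ne.symm hi]
    all_goals (try split_ifs)
    all_goals (first | (intro hij; exfalso; omega) | (intro hij; simp) | ring | omega | simp)
  case h2 => intro habs; exact absurd (Finset.mem_univ a) habs
  rw [Finset.sum_eq_single c ?h3 ?h4]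
  case h3 =>
    intro j _ hj
    simp [Ne.symm hj, h.ne']
    all_goals (try split_ifs)
    all_goals (first | (intro hij; exfalso; omega) | (intro hij; simp) | ring | omega | simp)
  case h4 => intro habs; exact absurd (Finset.mem_univ c) habs
  simp [h, h.ne, h.ne']
  ring

set_option maxHeartbeats 2000000 in
lemma caseA {K : Type*} [Field K] {n : ℕ} (a c : Fin n) (h : a < c) (x y : Fin n → K) :
    contract6 n ![e a, e a, e a, e c] x y = 48 * (x a * y c + x c * y a) := by
  rw [contract6_eq]
  have m0 : (![![e a, e a, e a, e c] 0, ![e a, e a, e a, e c] 1, ![e a, e a, e a, e c] 2,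
      ![e a, e a, e a, e c] 3, x, y] : Fin 6 → (Fin n → K)) = ![e a, e a, e a, e c, x, y] := rfl
  rw [m0]
  simp only [Fin.sum_univ_six, Fin.prod_univ_six,
    show (![e a, e a, e a, e c, x, y] : Fin 6 → (Fin n → K)) 0 = e a from rfl,
    show (![e a, e a, e a, e c, x, y] : Fin 6 → (Fin n → K)) 1 = e a from rfl,
    show (![e a, e a, e a, e c, x, y] : Fin 6 → (Fin n → K)) 2 = e a from rfl,
    show (![e a, e a, e a, e c, x, y] : Fin 6 → (Fin n → K)) 3 = e c from rfl,
    show (![e a, e a, e a, e c, x, y] : Fin 6 → (Fin n → K)) 4 = x from rfl,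
    show (![e a, e a, e a, e c, x, y] : Fin 6 → (Fin n → K)) 5 = y from rfl]
  simp only [e, Fin.reduceEq, Fin.reduceLT, ne_eq, ite_not, if_true, if_false,
    mul_ite, ite_mul, mul_zero, zero_mul, mul_one, one_mul, not_false_iff, not_true,
    ite_true, ite_false, zero_add, add_zero]
  rw [Finset.sum_eq_single a ?h1 ?h2]
  case h1 =>
    intro i _ hi
    apply Finset.sum_eq_zero
    intro j _
    simp [Ne.symm hi]
    all_goals (try split_ifs)
    all_goals (first | (intro hij; exfalso; omega) | (intro hij; simp) | ring | omega | simp)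
  case h2 => intro habs; exact absurd (Finset.mem_univ a) habs
  rw [Finset.sum_eq_single c ?h3 ?h4]
  case h3 =>
    intro j _ hj
    simp [Ne.symm hj, h.ne']
    all_goals (try split_ifs)
    all_goals (first | (intro hij; exfalso; omega) | (intro hij; simp) | ring | omega | simp)
  case h4 => intro habs; exact absurd (Finset.mem_univ c) habs
  simp [h, h.ne, h.ne']
  ring

set_option maxHeartbeats 2000000 in
lemma caseC {K : Type*} [Field K] {n : ℕ} (hn : 2 ≤ n) (x y : Fin n → K) :
    contract6 n ![e ⟨n-2, by omega⟩, e ⟨n-2, by omega⟩, e ⟨n-2, by omega⟩, e ⟨n-2, by omega⟩] x y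
    = 48 * (x ⟨n-1, by omega⟩ * y ⟨n-1, by omega⟩) := by
  set u : Fin n := ⟨n-2, by omega⟩ with hu
  set t : Fin n := ⟨n-1, by omega⟩ with ht
  rw [contract6_eq]
  have m0 : (![![e u, e u, e u, e u] 0, ![e u, e u, e u, e u] 1, ![e u, e u, e u, e u] 2,
      ![e u, e u, e u, e u] 3, x, y] : Fin 6 → (Fin n → K)) = ![e u, e u, e u, e u, x, y] := rfl
  rw [m0]
  simp only [Fin.sum_univ_six, Fin.prod_univ_six,
    show (![e u, e u, e u, e u, x, y] : Fin 6 → (Fin n → K)) 0 = e u from rfl,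
    show (![e u, e u, e u, e u, x, y] : Fin 6 → (Fin n → K)) 1 = e u from rfl,
    show (![e u, e u, e u, e u, x, y] : Fin 6 → (Fin n → K)) 2 = e u from rfl,
    show (![e u, e u, e u, e u, x, y] : Fin 6 → (Fin n → K)) 3 = e u from rfl,
    show (![e u, e u, e u, e u, x, y] : Fin 6 → (Fin n → K)) 4 = x from rfl,
    show (![e u, e u, e u, e u, x, y] : Fin 6 → (Fin n → K)) 5 = y from rfl]
  simp only [e, Fin.reduceEq, Fin.reduceLT, ne_eq, ite_not, if_true, if_false,
    mul_ite, ite_mul, mul_zero, zero_mul, mul_one, one_mul, not_false_iff, not_true,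
    ite_true, ite_false, zero_add, add_zero]
  rw [Finset.sum_eq_single u ?h1 ?h2]
  case h1 =>
    intro i _ hi
    apply Finset.sum_eq_zero
    intro j _
    simp [Ne.symm hi]
    all_goals (try split_ifs)
    all_goals (first | (intro hij; exfalso; omega) | (intro hij; simp) | ring | omega | simp)
  case h2 => intro habs; exact absurd (Finset.mem_univ u) habs
  rw [Finset.sum_eq_single t ?h3 ?h4]
  case h3 =>
    intro j _ hj
    have huj : ¬ u < j := by
      have hj' : (j : ℕ) ≠ n - 1 := fun hh => hj (Fin.ext hh)
      have := j.isLt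
      simp only [hu, Fin.lt_def]
      omega
    simp [huj]
  case h4 => intro habs; exact absurd (Finset.mem_univ t) habs
  have hut : u < t := by simp only [hu, ht, Fin.lt_def]; omega
  simp [hut, hut.ne]
  ring


noncomputable def bform {K : Type*} [Field K] {n : ℕ} (a b : Fin n) :
    LinearMap.BilinForm K (Fin n → K) :=
  LinearMap.mk₂ K (fun x y => x a * y b)
    (fun x x' y => by simp only [Pi.add_apply]; ring)
    (fun c x y => by simp only [Pi.smul_apply, smul_eq_mul]; ring)
    (fun x y y' => by simp only [Pi.add_apply]; ring)
    (fun c x y => by simp only [Pi.smul_apply, smul_eq_mul]; ring)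

@[simp] lemma bform_apply {K : Type*} [Field K] {n : ℕ} (a b : Fin n) (x y : Fin n → K) :
    bform a b x y = x a * y b := rfl

lemma mem_of_contract {K : Type*} [Field K] [CharZero K] {n : ℕ}
    (g : LinearMap.BilinForm K (Fin n → K)) (v : Fin 4 → (Fin n → K))
    (hg : ∀ x y, 48 * g x y = contract6 n v x y) :
    g ∈ Submodule.span K
      {f : LinearMap.BilinForm K (Fin n → K) |
        ∃ v : Fin 4 → (Fin n → K), ∀ x y, f x y = contract6 n v x y} := by
  have h48 : (48 : K) ≠ 0 := by norm_num
  have hmem : (48 : K) • g ∈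
      {f : LinearMap.BilinForm K (Fin n → K) |
        ∃ v : Fin 4 → (Fin n → K), ∀ x y, f x y = contract6 n v x y} :=
    ⟨v, fun x y => by
      simpa [LinearMap.smul_apply, smul_eq_mul] using hg x y⟩
  have h2 := Submodule.smul_mem (Submodule.span K _) (48 : K)⁻¹ (Submodule.subset_span hmem)
  rwa [smul_smul, inv_mul_cancel₀ h48, one_smul] at h2

lemma tri {K : Type*} [CommRing K] {n : ℕ} (F : Fin n → Fin n → K) :
    (∑ a : Fin n, ∑ c : Fin n, F a c)
    = (∑ a : Fin n, ∑ c : Fin n, if a < c then F a c + F c a else 0)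
      + ∑ a : Fin n, F a a := by
  have h1 : (∑ a : Fin n, ∑ c : Fin n, F a c)
      = (∑ a : Fin n, ∑ c : Fin n, ((if a < c then F a c else 0) + (if c < a then F a c else 0)
          + (if a = c then F a c else 0))) := by
    refine Finset.sum_congr rfl fun a _ => Finset.sum_congr rfl fun c _ => ?_
    rcases lt_trichotomy a c with h|h|h
    · simp [h, asymm h, h.ne]
    · simp [h, lt_irrefl]
    · simp [h, asymm h, h.ne']
  rw [h1]
  simp only [Finset.sum_add_distrib]
  have h2 : (∑ a : Fin n, ∑ c : Fin n, if c < a then F a c else 0)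
      = (∑ a : Fin n, ∑ c : Fin n, if a < c then F c a else 0) := by rw [Finset.sum_comm]
  have h3 : (∑ a : Fin n, ∑ c : Fin n, if a = c then F a c else 0) = ∑ a : Fin n, F a a := by
    refine Finset.sum_congr rfl fun a _ => ?_
    simp
  rw [h2, h3]
  congr 1
  rw [← Finset.sum_add_distrib]
  refine Finset.sum_congr rfl fun a _ => ?_
  rw [← Finset.sum_add_distrib]
  refine Finset.sum_congr rfl fun c _ => ?_
  by_cases h : a < c <;> simp [h]

lemma expand_bilin {K : Type*} [Field K] {n : ℕ} (q : LinearMap.BilinForm K (Fin n → K))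
    (x y : Fin n → K) :
    q x y = ∑ a : Fin n, ∑ c : Fin n, x a * y c * q (e a) (e c) := by
  have he : ∀ a : Fin n, (fun j => if a = j then (1:K) else 0) = e a := fun a => rfl
  conv_lhs => rw [pi_eq_sum_univ x, pi_eq_sum_univ y]
  simp only [he, map_sum, LinearMap.sum_apply, map_smul, LinearMap.smul_apply,
    smul_eq_mul, Finset.mul_sum]
  rw [Finset.sum_comm]
  refine Finset.sum_congr rfl fun a _ => Finset.sum_congr rfl fun c _ => by ring

end Contract6Aux

open Contract6Aux in
/-- The element `∑_{i<j} λᵢ⁴ λⱼ²` of `S⁶ V*`, viewed as a linear map `S⁴ V → S² V*`,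
is surjective.  Since `S⁴ V` is spanned by the products `v₀·v₁·v₂·v₃` and `S² V*` is
(in characteristic zero) the space of symmetric bilinear forms, this says precisely
that every symmetric bilinear form on `V` lies in the span of the contractions of the
given 6-form with quadruples of vectors. -/
theorem stmt_0 {K : Type*} [Field K] [CharZero K] (n : ℕ) (hn : 2 ≤ n)
    (q : LinearMap.BilinForm K (Fin n → K)) (hq : ∀ x y, q x y = q y x) :
    q ∈ Submodule.span K
      {f : LinearMap.BilinForm K (Fin n → K) |
        ∃ v : Fin 4 → (Fin n → K), ∀ x y, f x y = contract6 n v x y} := by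
  classical
  set t : Fin n := ⟨n - 1, by omega⟩ with ht
  set u : Fin n := ⟨n - 2, by omega⟩ with hu
  have hF : ∀ a c : Fin n, a < c → bform a c + bform c a ∈ Submodule.span K
      {f : LinearMap.BilinForm K (Fin n → K) |
        ∃ v : Fin 4 → (Fin n → K), ∀ x y, f x y = contract6 n v x y} := by
    intro a c h
    refine mem_of_contract _ ![e a, e a, e a, e c] fun x y => ?_
    simp only [LinearMap.add_apply, bform_apply]
    exact (caseA a c h x y).symm
  have hG : ∀ a : Fin n, bform a a ∈ Submodule.span K
      {f : LinearMap.BilinForm K (Fin n → K) |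
        ∃ v : Fin 4 → (Fin n → K), ∀ x y, f x y = contract6 n v x y} := by
    intro a
    by_cases ha : a = t
    · subst ha
      refine mem_of_contract _ ![e u, e u, e u, e u] fun x y => ?_
      simp only [bform_apply]
      exact (caseC hn x y).symm
    · have ha' : (a : ℕ) ≠ n - 1 := fun hh => ha (Fin.ext hh)
      have hlt : a < t := by
        have := a.isLt
        simp only [ht, Fin.lt_def]
        omega
      refine mem_of_contract _ ![e a, e a, e t, e t] fun x y => ?_
      simp only [bform_apply]
      exact (caseB a t hlt x y).symm
  have hdecomp : q = (∑ a : Fin n, ∑ c : Fin n,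
        (if a < c then q (e a) (e c) else 0) • (bform a c + bform c a))
      + ∑ a : Fin n, q (e a) (e a) • bform a a := by
    apply LinearMap.ext; intro x; apply LinearMap.ext; intro y
    simp only [LinearMap.add_apply, LinearMap.sum_apply, LinearMap.smul_apply,
      smul_eq_mul, bform_apply]
    rw [expand_bilin q x y, tri (fun a c => x a * y c * q (e a) (e c))]
    congr 1
    · refine Finset.sum_congr rfl fun a _ => Finset.sum_congr rfl fun c _ => ?_
      by_cases h : a < c
      · have hsym : q (e c) (e a) = q (e a) (e c) := hq (e c) (e a)
        simp only [h, if_true, ite_true]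
        rw [hsym]
        ring
      · simp [h]
    · exact Finset.sum_congr rfl fun a _ => by ring
  rw [hdecomp]
  refine Submodule.add_mem _ ?_ ?_
  · refine Submodule.sum_mem _ fun a _ => Submodule.sum_mem _ fun c _ => ?_
    by_cases h : a < c
    · exact Submodule.smul_mem _ _ (hF a c h)
    · simp only [h, if_false, ite_false, zero_smul]
      exact Submodule.zero_mem _
  · exact Submodule.sum_mem _ fun a _ => Submodule.smul_mem _ _ (hG a)
end

section
/- Let V be a finite-dimensional vector space over a field K of characteristic zero, of dimension n ≥ 2, with basis e_1,...,e_n and dual basis λ_1,...,λ_n. The element Σ_{i,j} λ_i^3 λ_j^2 ⊗ λ_i of S^5 V* ⊗ V*, viewed as a linear map from S^4 V to V* ⊗ V*, is surjective. -/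
/-- The element `∑_{i,j} λᵢ³ λⱼ² ⊗ λᵢ` of `S⁵ V* ⊗ V*` (the `S⁵` factor given by its full
symmetrization), contracted with four vectors `v 0, …, v 3 ∈ V` in four of the five
symmetric slots, with `x` in the remaining symmetric slot and `y` in the `V*` factor.
Here `V = Fin n → K` with standard basis `e i` and dual basis `λ i`. -/
def contract5 {K : Type*} [Field K] (n : ℕ)
    (v : Fin 4 → (Fin n → K)) (x y : Fin n → K) : K :=
  let w : Fin 5 → (Fin n → K) := Fin.snoc v x
  ∑ i : Fin n, ∑ j : Fin n,
    (∑ σ : Equiv.Perm (Fin 5), ∏ k : Fin 5,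
      (if (k : ℕ) < 3 then w (σ k) i else w (σ k) j)) * y i

/-! Contracting with `e_a³ e_b` gives the bilinear form `(x, y) ↦ c · x_b y_a`: for `a ≠ b`
only the `3! · 2! = 12` permutations putting the three `e_a` into the `λᵢ³` slots and `e_b`, `x`
into the `λⱼ²` slots contribute, and for `a = b` all `5! = 120` do. In characteristic zero `c`
is invertible, so every elementary form `λ_b ⊗ λ_a` lies in the image, and these span
`V* ⊗ V*`. -/

open Equiv

theorem Equiv.Perm.sum_fin_succ {M : Type*} [AddCommMonoid M] {m : ℕ}
    (f : Perm (Fin (m + 1)) → M) :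
    ∑ σ, f σ = ∑ p, ∑ τ, f (Perm.decomposeFin.symm (p, τ)) := by
  rw [← Perm.decomposeFin.symm.sum_comp, Fintype.sum_prod_type]

theorem Fin.snoc_four {α : Type*} (u : Fin 4 → α) (x : α) :
    (Fin.snoc u x : Fin 5 → α) = ![u 0, u 1, u 2, u 3, x] := by
  ext k
  fin_cases k <;> rfl

namespace LinearMap.BilinForm

variable {R M ι : Type*} [CommSemiring R] [AddCommMonoid M] [Module R M] [Fintype ι]
  [DecidableEq ι] (b : Module.Basis ι R M)

theorem eq_sum_smul_linMulLin_coord (q : LinearMap.BilinForm R M) :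
    q = ∑ i, ∑ j, q (b i) (b j) • linMulLin (b.coord i) (b.coord j) := by
  refine LinearMap.ext_basis b b fun k l => ?_
  simp [linMulLin_apply, Finsupp.single_apply]

theorem mem_of_forall_linMulLin_coord_mem {P : Submodule R (LinearMap.BilinForm R M)}
    (hP : ∀ i j, linMulLin (b.coord i) (b.coord j) ∈ P) (q : LinearMap.BilinForm R M) :
    q ∈ P := by
  rw [eq_sum_smul_linMulLin_coord b q]
  exact P.sum_mem fun i _ => P.sum_mem fun j _ => P.smul_mem _ (hP i j)

end LinearMap.BilinForm

theorem contract5_single {K : Type*} [Field K] {n : ℕ} (a b : Fin n) (x y : Fin n → K) :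
    contract5 n ![Pi.single a 1, Pi.single a 1, Pi.single a 1, Pi.single b 1] x y
      = (if a = b then 120 else 12) * (x b * y a) := by
  simp only [contract5, Fin.snoc_four, Perm.sum_fin_succ, Fintype.sum_unique, Fin.sum_univ_succ,
    Fin.prod_univ_succ, Fin.prod_univ_zero]
  simp +decide only [Perm.decomposeFin_symm_apply_zero, Perm.decomposeFin_symm_apply_succ,
    swap_apply_def, ↓reduceIte, Matrix.cons_val_zero, Matrix.cons_val_succ]
  simp only [Matrix.cons_val, Matrix.cons_val_fin_one, Pi.single_apply, add_mul,
    Finset.sum_add_distrib]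
  simp +contextual only [mul_one, mul_ite, ite_mul, one_mul, mul_zero, zero_mul,
    Finset.sum_ite_eq', Finset.mem_univ, ↓reduceIte]
  obtain rfl | hab := eq_or_ne a b
  · simp only [Finset.sum_ite_eq', Finset.mem_univ, ↓reduceIte]
    ring
  · simp only [hab, hab.symm, ↓reduceIte, Finset.sum_const_zero]
    ring

theorem stmt_1_general {K : Type*} [Field K] [CharZero K] (n : ℕ)
    (q : LinearMap.BilinForm K (Fin n → K)) :
    q ∈ Submodule.span K
      {f : LinearMap.BilinForm K (Fin n → K) |
        ∃ v : Fin 4 → (Fin n → K), ∀ x y, f x y = contract5 n v x y} := by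
  refine LinearMap.BilinForm.mem_of_forall_linMulLin_coord_mem (Pi.basisFun K (Fin n))
    (fun i j => ?_) q
  set c : K := if j = i then 120 else 12
  have hc : c ≠ 0 := by unfold c; split_ifs <;> norm_num
  rw [← inv_smul_smul₀ hc (LinearMap.BilinForm.linMulLin _ _)]
  refine Submodule.smul_mem _ _ (Submodule.subset_span
    ⟨![Pi.single j 1, Pi.single j 1, Pi.single j 1, Pi.single i 1], fun x y => ?_⟩)
  simp only [LinearMap.smul_apply, smul_eq_mul, LinearMap.BilinForm.linMulLin_apply,
    Module.Basis.coord_apply, Pi.basisFun_repr, contract5_single, c]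

/-- The element `∑_{i,j} λᵢ³ λⱼ² ⊗ λᵢ` of `S⁵ V* ⊗ V*`, viewed as a linear map
`S⁴ V → V* ⊗ V*`, is surjective.  Since `S⁴ V` is spanned by products `v₀·v₁·v₂·v₃`
and `V* ⊗ V*` is (for finite-dimensional `V`) the space of all bilinear forms, this
says precisely that every bilinear form on `V` lies in the span of the contractions. -/
theorem stmt_1 {K : Type*} [Field K] [CharZero K] (n : ℕ) (hn : 2 ≤ n)
    (q : LinearMap.BilinForm K (Fin n → K)) :
    q ∈ Submodule.span K
      {f : LinearMap.BilinForm K (Fin n → K) |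
        ∃ v : Fin 4 → (Fin n → K), ∀ x y, f x y = contract5 n v x y} :=
  stmt_1_general n q
end
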